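/- For every Borel function ρ:ℝ^{M₁}×ℝ^{M₂}→ℝ^N that is square-integrable with respect to ν, the worst-case mean square error over 𝓕 is bounded below by that of the C-optimal estimator: sup_{F∈𝓕} MSE(F,ρ) ≥ c − ∫‖ρ_C(x₁,x₂)‖² dν(x₁,x₂). -/

import Mathlib

open MeasureTheory

noncomputable section

abbrev Euc (k : ℕ) : Type := EuclideanSpace ℝ (Fin k)

abbrev XSp (M₁ M₂ : ℕ) : Type := Euc M₁ × Euc M₂

abbrev ΩSp (M₁ M₂ N : ℕ) : Type := XSp M₁ M₂ × Euc N

/-- Mean square error of a (multi-domain) estimator `ρ` under joint law `F` of `((X₁,X₂),Y)`. -/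
def MSE {M₁ M₂ N : ℕ} (F : Measure (ΩSp M₁ M₂ N)) (ρ : XSp M₁ M₂ → Euc N) : ℝ :=
  ∫ ω, ‖ω.2 - ρ ω.1‖ ^ 2 ∂F

/-- The class `C = A + B` of estimators `(x₁,x₂) ↦ φ(x₁) + ψ(x₂)`, `φ ∈ A`, `ψ ∈ B`. -/
def Cset {M₁ M₂ N : ℕ} (A : Submodule ℝ (Euc M₁ → Euc N)) (B : Submodule ℝ (Euc M₂ → Euc N)) :
    Set (XSp M₁ M₂ → Euc N) :=
  {ρ | ∃ φ ∈ A, ∃ ψ ∈ B, ρ = fun x => φ x.1 + ψ x.2}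

/-- The family `𝓕` of joint distributions consistent with the partial knowledge
`(ν, φ_A, ψ_B, c)`. -/
def SetF {M₁ M₂ N : ℕ} (ν : Measure (XSp M₁ M₂))
    (A : Submodule ℝ (Euc M₁ → Euc N)) (B : Submodule ℝ (Euc M₂ → Euc N))
    (φA : Euc M₁ → Euc N) (ψB : Euc M₂ → Euc N) (c : ℝ) :
    Set (Measure (ΩSp M₁ M₂ N)) :=
  {F | IsProbabilityMeasure F ∧ F.map Prod.fst = ν ∧
    MemLp (fun ω : ΩSp M₁ M₂ N => ω.2) 2 F ∧
    (∀ φ ∈ A, MSE F (fun x => φA x.1) ≤ MSE F (fun x => φ x.1)) ∧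
    (∀ ψ ∈ B, MSE F (fun x => ψB x.2) ≤ MSE F (fun x => ψ x.2)) ∧
    ∫ ω, ‖ω.2‖ ^ 2 ∂F = c}

/-- The σ-algebra generated by `(X₁,X₂)` on the sample space. -/
def sigmaX (M₁ M₂ N : ℕ) : MeasurableSpace (ΩSp M₁ M₂ N) :=
  MeasurableSpace.comap Prod.fst inferInstance

/-- The σ-algebra generated by `X₁` on the sample space. -/
def sigmaX1 (M₁ M₂ N : ℕ) : MeasurableSpace (ΩSp M₁ M₂ N) :=
  MeasurableSpace.comap (fun ω => ω.1.1) inferInstance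

/-- The σ-algebra generated by `X₁` on the `(X₁,X₂)`-space. -/
def sigmaX1' (M₁ M₂ : ℕ) : MeasurableSpace (XSp M₁ M₂) :=
  MeasurableSpace.comap Prod.fst inferInstance

/-- Multi-domain regret of `ρ(X₁,X₂)`: its MSE minus that of `E_F[Y | X₁,X₂]`. -/
def REG {M₁ M₂ N : ℕ} (F : Measure (ΩSp M₁ M₂ N)) (ρ : XSp M₁ M₂ → Euc N) : ℝ :=
  MSE F ρ - ∫ ω, ‖ω.2 - condExp (sigmaX M₁ M₂ N) F (fun ω' => ω'.2) ω‖ ^ 2 ∂F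

/-- Mean square error of a single-domain estimator `ρ(X₁)`. -/
def MSE1 {M₁ M₂ N : ℕ} (F : Measure (ΩSp M₁ M₂ N)) (ρ : Euc M₁ → Euc N) : ℝ :=
  ∫ ω, ‖ω.2 - ρ ω.1.1‖ ^ 2 ∂F

/-- Single-domain regret of `ρ(X₁)`: its MSE minus that of `E_F[Y | X₁]`. -/
def REG1 {M₁ M₂ N : ℕ} (F : Measure (ΩSp M₁ M₂ N)) (ρ : Euc M₁ → Euc N) : ℝ :=
  MSE1 F ρ - ∫ ω, ‖ω.2 - condExp (sigmaX1 M₁ M₂ N) F (fun ω' => ω'.2) ω‖ ^ 2 ∂F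


section AuxLemmas
set_option linter.unusedSectionVars false
open RealInnerProductSpace

variable {α : Type*} [MeasurableSpace α] {μ : Measure α}
variable {E : Type*} [NormedAddCommGroup E] [InnerProductSpace ℝ E]

lemma aux_integrable_inner {f g : α → E} (hf : MemLp f 2 μ) (hg : MemLp g 2 μ) :
    Integrable (fun x => ⟪f x, g x⟫) μ := by
  have h := L2.integrable_inner (𝕜 := ℝ) (hf.toLp f) (hg.toLp g)
  refine h.congr ?_
  filter_upwards [hf.coeFn_toLp, hg.coeFn_toLp] with x h1 h2
  rw [h1, h2]

lemma aux_integrable_normsq {f : α → E} (hf : MemLp f 2 μ) :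
    Integrable (fun x => ‖f x‖ ^ 2) μ := hf.norm.integrable_sq

lemma aux_expand {u v : α → E} (hu : MemLp u 2 μ) (hv : MemLp v 2 μ) (t : ℝ) :
    ∫ x, ‖u x - t • v x‖ ^ 2 ∂μ
      = ∫ x, ‖u x‖ ^ 2 ∂μ - 2 * t * ∫ x, ⟪u x, v x⟫ ∂μ + t ^ 2 * ∫ x, ‖v x‖ ^ 2 ∂μ := by
  have h1 := aux_integrable_normsq hu
  have h2 := aux_integrable_inner hu hv
  have h3 := aux_integrable_normsq hv
  have hpt : ∀ x, ‖u x - t • v x‖ ^ 2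
      = ‖u x‖ ^ 2 - 2 * t * ⟪u x, v x⟫ + t ^ 2 * ‖v x‖ ^ 2 := by
    intro x
    rw [norm_sub_sq_real, inner_smul_right, norm_smul, mul_pow, Real.norm_eq_abs, sq_abs]
    ring
  simp_rw [hpt]
  have hInt1 : Integrable (fun x => ‖u x‖ ^ 2 - 2 * t * ⟪u x, v x⟫) μ := h1.sub (h2.const_mul _)
  have hInt2 : Integrable (fun x => t ^ 2 * ‖v x‖ ^ 2) μ := h3.const_mul _
  rw [integral_add hInt1 hInt2, integral_sub h1 (h2.const_mul _),
    integral_const_mul, integral_const_mul]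

lemma aux_sq_bound (a b : E) : ‖a - b‖ ^ 2 ≤ 2 * ‖a‖ ^ 2 + 2 * ‖b‖ ^ 2 := by
  have h := norm_sub_le a b
  have h2 := mul_le_mul h h (norm_nonneg (a - b)) (by positivity)
  nlinarith [sq_nonneg (‖a‖ - ‖b‖), norm_nonneg a, norm_nonneg b]

end AuxLemmas

open RealInnerProductSpace
set_option maxHeartbeats 1000000

/-- for every square-`ν`-integrable Borel estimator `ρ(X₁,X₂)`, the
worst-case MSE over `𝓕` is bounded below by that of the `C`-optimal estimator:
`sup_(F∈𝓕) MSE(F,ρ) ≥ c − ∫‖ρ_C‖² dν`. -/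
theorem stmt_5
    (M₁ M₂ N : ℕ) (hM₁ : 0 < M₁) (hM₂ : 0 < M₂) (hN : 0 < N)
    (ν : Measure (XSp M₁ M₂)) (hνp : IsProbabilityMeasure ν)
    (hνmom : MemLp (id : XSp M₁ M₂ → XSp M₁ M₂) 2 ν)
    (A : Submodule ℝ (Euc M₁ → Euc N)) (B : Submodule ℝ (Euc M₂ → Euc N))
    (hAmeas : ∀ φ ∈ A, Measurable φ) (hBmeas : ∀ ψ ∈ B, Measurable ψ)
    (hAL2 : ∀ φ ∈ A, MemLp φ 2 (ν.map Prod.fst))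
    (hBL2 : ∀ ψ ∈ B, MemLp ψ 2 (ν.map Prod.snd))
    (φA : Euc M₁ → Euc N) (ψB : Euc M₂ → Euc N) (hφA : φA ∈ A) (hψB : ψB ∈ B)
    (c : ℝ) (hc : 0 < c)
    (hne : (SetF ν A B φA ψB c).Nonempty)
    (ρC : XSp M₁ M₂ → Euc N) (hρCmem : ρC ∈ Cset A B)
    (hρCmin : ∀ F ∈ SetF ν A B φA ψB c, ∀ ρ' ∈ Cset A B, MSE F ρC ≤ MSE F ρ')
    (ρ : XSp M₁ M₂ → Euc N) (hρmeas : Measurable ρ) (hρL2 : MemLp ρ 2 ν) :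
    c - ∫ x, ‖ρC x‖ ^ 2 ∂ν ≤ ⨆ F ∈ SetF ν A B φA ψB c, MSE F ρ := by
  classical
  -- generic facts about members of Cset
  have hCmeas : ∀ σ ∈ Cset A B, Measurable σ := by
    rintro σ ⟨φ, hφ, ψ, hψ, rfl⟩
    exact ((hAmeas φ hφ).comp measurable_fst).add ((hBmeas ψ hψ).comp measurable_snd)
  have hCL2 : ∀ σ ∈ Cset A B, MemLp σ 2 ν := by
    rintro σ ⟨φ, hφ, ψ, hψ, rfl⟩
    have h1 : MemLp (fun x : XSp M₁ M₂ => φ x.1) 2 ν :=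
      (memLp_map_measure_iff (hAmeas φ hφ).aestronglyMeasurable
        measurable_fst.aemeasurable).mp (hAL2 φ hφ)
    have h2 : MemLp (fun x : XSp M₁ M₂ => ψ x.2) 2 ν :=
      (memLp_map_measure_iff (hBmeas ψ hψ).aestronglyMeasurable
        measurable_snd.aemeasurable).mp (hBL2 ψ hψ)
    exact h1.add h2
  have hρCmeas : Measurable ρC := hCmeas ρC hρCmem
  have hρCL2 : MemLp ρC 2 ν := hCL2 ρC hρCmem
  have hAinC : ∀ φ ∈ A, (fun x : XSp M₁ M₂ => φ x.1) ∈ Cset A B := by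
    intro φ hφ
    exact ⟨φ, hφ, 0, B.zero_mem, by funext x; simp⟩
  have hBinC : ∀ ψ ∈ B, (fun x : XSp M₁ M₂ => ψ x.2) ∈ Cset A B := by
    intro ψ hψ
    exact ⟨0, A.zero_mem, ψ, hψ, by funext x; simp⟩
  have hCadd : ∀ σ ∈ Cset A B, ∀ t : ℝ, (fun x => ρC x + t • σ x) ∈ Cset A B := by
    rintro σ ⟨φ₁, hφ₁, ψ₁, hψ₁, rfl⟩ t
    obtain ⟨φ₀, hφ₀, ψ₀, hψ₀, h0⟩ := hρCmem
    refine ⟨φ₀ + t • φ₁, A.add_mem hφ₀ (A.smul_mem t hφ₁),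
      ψ₀ + t • ψ₁, B.add_mem hψ₀ (B.smul_mem t hψ₁), ?_⟩
    funext x
    simp only [h0, Pi.add_apply, Pi.smul_apply, smul_add]
    module
  -- fix a base measure F ∈ 𝓕
  obtain ⟨F, hFS⟩ := hne
  have hFS' := hFS
  obtain ⟨hFp, hFfst, hFY2, hFA, hFB, hFc⟩ := hFS'
  haveI : IsProbabilityMeasure F := hFp
  -- transport L² facts to F
  have hCF : ∀ σ ∈ Cset A B, MemLp (fun ω : ΩSp M₁ M₂ N => σ ω.1) 2 F := by
    intro σ hσ
    have h := hCL2 σ hσ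
    rw [← hFfst] at h
    exact (memLp_map_measure_iff (hCmeas σ hσ).aestronglyMeasurable
      measurable_fst.aemeasurable).mp h
  have hρCF : MemLp (fun ω : ΩSp M₁ M₂ N => ρC ω.1) 2 F := hCF ρC hρCmem
  have hvF : MemLp (fun ω : ΩSp M₁ M₂ N => ω.2 - ρC ω.1) 2 F := hFY2.sub hρCF
  have hρF2 : MemLp (fun ω : ΩSp M₁ M₂ N => ρ ω.1) 2 F := by
    have h : MemLp ρ 2 (F.map Prod.fst) := by rw [hFfst]; exact hρL2
    exact (memLp_map_measure_iff hρmeas.aestronglyMeasurable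
      measurable_fst.aemeasurable).mp h
  -- orthogonality of the residual to Cset
  have horthσ : ∀ σ ∈ Cset A B,
      ∫ (ω : ΩSp M₁ M₂ N), ⟪σ ω.1, ω.2 - ρC ω.1⟫ ∂F = 0 := by
    intro σ hσ
    have hflipI : ∫ (ω : ΩSp M₁ M₂ N), ⟪σ ω.1, ω.2 - ρC ω.1⟫ ∂F
        = ∫ (ω : ΩSp M₁ M₂ N), ⟪ω.2 - ρC ω.1, σ ω.1⟫ ∂F :=
      integral_congr_ae (Filter.Eventually.of_forall fun ω => real_inner_comm _ _)
    rw [hflipI]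
    set I := ∫ (ω : ΩSp M₁ M₂ N), ⟪ω.2 - ρC ω.1, σ ω.1⟫ ∂F with hI
    set J := ∫ (ω : ΩSp M₁ M₂ N), ‖σ ω.1‖ ^ 2 ∂F with hJdef
    have hJ : 0 ≤ J := integral_nonneg fun ω => sq_nonneg _
    have key : ∀ t : ℝ, 0 ≤ -(2 * t * I) + t ^ 2 * J := by
      intro t
      have h1 := hρCmin F hFS (fun x => ρC x + t • σ x) (hCadd σ hσ t)
      have h2 : MSE F (fun x => ρC x + t • σ x)
          = MSE F ρC - 2 * t * I + t ^ 2 * J := by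
        have he : ∫ (ω : ΩSp M₁ M₂ N), ‖(ω.2 - ρC ω.1) - t • σ ω.1‖ ^ 2 ∂F
            = MSE F ρC - 2 * t * I + t ^ 2 * J :=
          aux_expand hvF (hCF σ hσ) t
        rw [← he]
        show (∫ (ω : ΩSp M₁ M₂ N), ‖ω.2 - (ρC ω.1 + t • σ ω.1)‖ ^ 2 ∂F) = _
        simp_rw [sub_add_eq_sub_sub]
      rw [h2] at h1
      linarith
    have hJ1 : (0:ℝ) < J + 1 := by linarith
    have h := key (I / (J + 1))
    have h2 : (0:ℝ) ≤ (-(2 * (I / (J + 1)) * I) + (I / (J + 1)) ^ 2 * J) * (J + 1) ^ 2 :=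
      mul_nonneg h (sq_nonneg _)
    have h3 : (-(2 * (I / (J + 1)) * I) + (I / (J + 1)) ^ 2 * J) * (J + 1) ^ 2
        = -(I ^ 2 * (J + 2)) := by
      field_simp
      ring
    rw [h3] at h2
    nlinarith [sq_nonneg I]
  -- inner product splitting
  have hsplit : ∀ h : XSp M₁ M₂ → Euc N, MemLp (fun ω : ΩSp M₁ M₂ N => h ω.1) 2 F →
      ∫ (ω : ΩSp M₁ M₂ N), ⟪ω.2 - h ω.1, ω.2 - ρC ω.1⟫ ∂F
        = (∫ (ω : ΩSp M₁ M₂ N), ⟪ω.2, ω.2 - ρC ω.1⟫ ∂F) - ∫ (ω : ΩSp M₁ M₂ N), ⟪h ω.1, ω.2 - ρC ω.1⟫ ∂F := by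
    intro h hhF
    rw [← integral_sub (aux_integrable_inner hFY2 hvF) (aux_integrable_inner hhF hvF)]
    refine integral_congr_ae (Filter.Eventually.of_forall fun ω => ?_)
    simp only [inner_sub_left]
  set K := ∫ (ω : ΩSp M₁ M₂ N), ⟪ω.2, ω.2 - ρC ω.1⟫ ∂F with hKdef
  set Jres := ∫ (ω : ΩSp M₁ M₂ N), ‖ω.2 - ρC ω.1‖ ^ 2 ∂F with hJresdef
  have hK : K = Jres := by
    have h1 := hsplit ρC hρCF
    have h2 := horthσ ρC hρCmem
    have h3 : ∫ (ω : ΩSp M₁ M₂ N), ⟪ω.2 - ρC ω.1, ω.2 - ρC ω.1⟫ ∂F = Jres :=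
      integral_congr_ae (Filter.Eventually.of_forall fun ω => real_inner_self_eq_norm_sq _)
    rw [h2, sub_zero] at h1
    rw [← h1, h3]
  -- Jres = c - ∫ ‖ρC‖² dν
  have hch : ∫ x, ‖ρC x‖ ^ 2 ∂ν = ∫ (ω : ΩSp M₁ M₂ N), ‖ρC ω.1‖ ^ 2 ∂F := by
    rw [← hFfst]
    exact integral_map measurable_fst.aemeasurable
      (hρCmeas.norm.pow_const 2).aestronglyMeasurable
  have hJres : Jres = c - ∫ x, ‖ρC x‖ ^ 2 ∂ν := by
    have he : ∫ (ω : ΩSp M₁ M₂ N), ‖ω.2 - (1:ℝ) • ρC ω.1‖ ^ 2 ∂F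
        = (∫ (ω : ΩSp M₁ M₂ N), ‖ω.2‖ ^ 2 ∂F) - 2 * 1 * (∫ (ω : ΩSp M₁ M₂ N), ⟪ω.2, ρC ω.1⟫ ∂F)
          + 1 ^ 2 * ∫ (ω : ΩSp M₁ M₂ N), ‖ρC ω.1‖ ^ 2 ∂F :=
      aux_expand hFY2 hρCF 1
    simp only [one_smul, one_pow, one_mul, mul_one] at he
    have he' : Jres = c - 2 * (∫ (ω : ΩSp M₁ M₂ N), ⟪ω.2, ρC ω.1⟫ ∂F)
        + ∫ (ω : ΩSp M₁ M₂ N), ‖ρC ω.1‖ ^ 2 ∂F := by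
      rw [hJresdef, he, hFc]
    -- ∫⟪Y, ρC⟫ = ∫‖ρC‖² via orthogonality
    have hsub : ∫ (ω : ΩSp M₁ M₂ N), ⟪ω.2 - ρC ω.1, ρC ω.1⟫ ∂F
        = (∫ (ω : ΩSp M₁ M₂ N), ⟪ω.2, ρC ω.1⟫ ∂F) - ∫ (ω : ΩSp M₁ M₂ N), ⟪ρC ω.1, ρC ω.1⟫ ∂F := by
      rw [← integral_sub (aux_integrable_inner hFY2 hρCF) (aux_integrable_inner hρCF hρCF)]
      refine integral_congr_ae (Filter.Eventually.of_forall fun ω => ?_)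
      simp only [inner_sub_left]
    have hz : ∫ (ω : ΩSp M₁ M₂ N), ⟪ω.2 - ρC ω.1, ρC ω.1⟫ ∂F = 0 := by
      rw [← horthσ ρC hρCmem]
      exact integral_congr_ae (Filter.Eventually.of_forall fun ω => real_inner_comm _ _)
    have hself : ∫ (ω : ΩSp M₁ M₂ N), ⟪ρC ω.1, ρC ω.1⟫ ∂F = ∫ (ω : ΩSp M₁ M₂ N), ‖ρC ω.1‖ ^ 2 ∂F :=
      integral_congr_ae (Filter.Eventually.of_forall fun ω => real_inner_self_eq_norm_sq _)
    rw [hz, hself] at hsub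
    rw [he', hch]
    linarith
  -- the flipped measure
  set T : ΩSp M₁ M₂ N → ΩSp M₁ M₂ N := fun ω => (ω.1, (2:ℝ) • ρC ω.1 - ω.2) with hTdef
  have hT : Measurable T :=
    measurable_fst.prodMk (((hρCmeas.comp measurable_fst).const_smul (2:ℝ)).sub measurable_snd)
  -- flip formula for MSE
  have hflip : ∀ h : XSp M₁ M₂ → Euc N, Measurable h →
      MemLp (fun ω : ΩSp M₁ M₂ N => h ω.1) 2 F →
      MSE (F.map T) h = MSE F h
        - 4 * (∫ (ω : ΩSp M₁ M₂ N), ⟪ω.2 - h ω.1, ω.2 - ρC ω.1⟫ ∂F) + 4 * Jres := by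
    intro h hh hhF
    have hmi : AEStronglyMeasurable (fun ω : ΩSp M₁ M₂ N => ‖ω.2 - h ω.1‖ ^ 2) (F.map T) :=
      ((measurable_snd.sub (hh.comp measurable_fst)).norm.pow_const 2).aestronglyMeasurable
    have h1 : MSE (F.map T) h = ∫ (ω : ΩSp M₁ M₂ N), ‖((2:ℝ) • ρC ω.1 - ω.2) - h ω.1‖ ^ 2 ∂F :=
      integral_map hT.aemeasurable hmi
    have h2 : (∫ (ω : ΩSp M₁ M₂ N), ‖((2:ℝ) • ρC ω.1 - ω.2) - h ω.1‖ ^ 2 ∂F)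
        = ∫ (ω : ΩSp M₁ M₂ N), ‖(ω.2 - h ω.1) - (2:ℝ) • (ω.2 - ρC ω.1)‖ ^ 2 ∂F := by
      refine integral_congr_ae (Filter.Eventually.of_forall fun ω => ?_)
      show ‖((2:ℝ) • ρC ω.1 - ω.2) - h ω.1‖ ^ 2 = ‖(ω.2 - h ω.1) - (2:ℝ) • (ω.2 - ρC ω.1)‖ ^ 2
      have hveq : ((2:ℝ) • ρC ω.1 - ω.2) - h ω.1 = (ω.2 - h ω.1) - (2:ℝ) • (ω.2 - ρC ω.1) := by
        module
      rw [hveq]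
    have h3 : ∫ (ω : ΩSp M₁ M₂ N), ‖(ω.2 - h ω.1) - (2:ℝ) • (ω.2 - ρC ω.1)‖ ^ 2 ∂F
        = MSE F h - 2 * 2 * (∫ (ω : ΩSp M₁ M₂ N), ⟪ω.2 - h ω.1, ω.2 - ρC ω.1⟫ ∂F) + 2 ^ 2 * Jres :=
      aux_expand (hFY2.sub hhF) hvF 2
    rw [h1, h2, h3]
    ring
  -- MSE under F.map T shifts by a constant on Cset
  have hshift : ∀ σ ∈ Cset A B,
      MSE (F.map T) σ = MSE F σ - 4 * K + 4 * Jres := by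
    intro σ hσ
    rw [hflip σ (hCmeas σ hσ) (hCF σ hσ), hsplit σ (hCF σ hσ), horthσ σ hσ]
    ring
  -- F.map T ∈ 𝓕
  have hF'S : F.map T ∈ SetF ν A B φA ψB c := by
    refine ⟨Measure.isProbabilityMeasure_map hT.aemeasurable, ?_, ?_, ?_, ?_, ?_⟩
    · rw [Measure.map_map measurable_fst hT]
      exact hFfst
    · have h : MemLp (fun ω : ΩSp M₁ M₂ N => (2:ℝ) • ρC ω.1 - ω.2) 2 F :=
        (hρCF.const_smul (2:ℝ)).sub hFY2
      exact (memLp_map_measure_iff measurable_snd.aestronglyMeasurable hT.aemeasurable).mpr h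
    · intro φ hφ
      have h1 := hshift _ (hAinC φA hφA)
      have h2 := hshift _ (hAinC φ hφ)
      have h3 := hFA φ hφ
      rw [h1, h2]
      linarith
    · intro ψ hψ
      have h1 := hshift _ (hBinC ψB hψB)
      have h2 := hshift _ (hBinC ψ hψ)
      have h3 := hFB ψ hψ
      rw [h1, h2]
      linarith
    · have h0 : ∫ (ω : ΩSp M₁ M₂ N), ‖ω.2‖ ^ 2 ∂(F.map T)
          = ∫ (ω : ΩSp M₁ M₂ N), ‖(2:ℝ) • ρC ω.1 - ω.2‖ ^ 2 ∂F :=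
        integral_map hT.aemeasurable (measurable_snd.norm.pow_const 2).aestronglyMeasurable
      have h1 : (∫ (ω : ΩSp M₁ M₂ N), ‖(2:ℝ) • ρC ω.1 - ω.2‖ ^ 2 ∂F)
          = ∫ (ω : ΩSp M₁ M₂ N), ‖ω.2 - (2:ℝ) • (ω.2 - ρC ω.1)‖ ^ 2 ∂F := by
        refine integral_congr_ae (Filter.Eventually.of_forall fun ω => ?_)
        show ‖(2:ℝ) • ρC ω.1 - ω.2‖ ^ 2 = ‖ω.2 - (2:ℝ) • (ω.2 - ρC ω.1)‖ ^ 2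
        have hveq : (2:ℝ) • ρC ω.1 - ω.2 = ω.2 - (2:ℝ) • (ω.2 - ρC ω.1) := by module
        rw [hveq]
      have h2 : ∫ (ω : ΩSp M₁ M₂ N), ‖ω.2 - (2:ℝ) • (ω.2 - ρC ω.1)‖ ^ 2 ∂F
          = (∫ (ω : ΩSp M₁ M₂ N), ‖ω.2‖ ^ 2 ∂F) - 2 * 2 * K + 2 ^ 2 * Jres :=
        aux_expand hFY2 hvF 2
      rw [h0, h1, h2, hFc, hK]
      ring
  -- the pair F, F.map T gives the lower bound
  set Iρ := ∫ (ω : ΩSp M₁ M₂ N), ⟪ω.2 - ρ ω.1, ω.2 - ρC ω.1⟫ ∂F with hIρdef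
  have hMρ' : MSE (F.map T) ρ = MSE F ρ - 4 * Iρ + 4 * Jres := hflip ρ hρmeas hρF2
  have hnn : 0 ≤ MSE F ρ - 2 * Iρ + Jres := by
    have h5 : ∫ (ω : ΩSp M₁ M₂ N), ‖(ω.2 - ρ ω.1) - (1:ℝ) • (ω.2 - ρC ω.1)‖ ^ 2 ∂F
        = MSE F ρ - 2 * 1 * Iρ + 1 ^ 2 * Jres := aux_expand (hFY2.sub hρF2) hvF 1
    have hge : 0 ≤ ∫ (ω : ΩSp M₁ M₂ N), ‖(ω.2 - ρ ω.1) - (1:ℝ) • (ω.2 - ρC ω.1)‖ ^ 2 ∂F :=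
      integral_nonneg fun ω => sq_nonneg _
    rw [h5] at hge
    linarith
  have hor : Jres ≤ MSE F ρ ∨ Jres ≤ MSE (F.map T) ρ := by
    by_contra hcon
    push_neg at hcon
    rw [hMρ'] at hcon
    obtain ⟨ha, hb⟩ := hcon
    linarith
  -- bounding the supremum from below
  have hbound : ∀ G ∈ SetF ν A B φA ψB c, MSE G ρ ≤ 2 * c + 2 * ∫ x, ‖ρ x‖ ^ 2 ∂ν := by
    intro G hG
    obtain ⟨hGp, hGfst, hGY2, -, -, hGc⟩ := hG
    have hρG : MemLp (fun ω : ΩSp M₁ M₂ N => ρ ω.1) 2 G := by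
      have h : MemLp ρ 2 (G.map Prod.fst) := by rw [hGfst]; exact hρL2
      exact (memLp_map_measure_iff hρmeas.aestronglyMeasurable
        measurable_fst.aemeasurable).mp h
    have hint : Integrable (fun ω : ΩSp M₁ M₂ N => 2 * ‖ω.2‖ ^ 2 + 2 * ‖ρ ω.1‖ ^ 2) G :=
      ((aux_integrable_normsq hGY2).const_mul 2).add ((aux_integrable_normsq hρG).const_mul 2)
    have hmse_le : MSE G ρ ≤ ∫ (ω : ΩSp M₁ M₂ N), (2 * ‖ω.2‖ ^ 2 + 2 * ‖ρ ω.1‖ ^ 2) ∂G := by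
      refine integral_mono_of_nonneg (Filter.Eventually.of_forall fun ω => sq_nonneg _) hint
        (Filter.Eventually.of_forall fun ω => ?_)
      exact aux_sq_bound _ _
    have hsplit2 : ∫ (ω : ΩSp M₁ M₂ N), (2 * ‖ω.2‖ ^ 2 + 2 * ‖ρ ω.1‖ ^ 2) ∂G
        = 2 * (∫ (ω : ΩSp M₁ M₂ N), ‖ω.2‖ ^ 2 ∂G) + 2 * ∫ (ω : ΩSp M₁ M₂ N), ‖ρ ω.1‖ ^ 2 ∂G := by
      rw [integral_add ((aux_integrable_normsq hGY2).const_mul 2)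
        ((aux_integrable_normsq hρG).const_mul 2), integral_const_mul, integral_const_mul]
    have hρν : ∫ (ω : ΩSp M₁ M₂ N), ‖ρ ω.1‖ ^ 2 ∂G = ∫ x, ‖ρ x‖ ^ 2 ∂ν := by
      rw [← hGfst]
      exact (integral_map measurable_fst.aemeasurable
        (hρmeas.norm.pow_const 2).aestronglyMeasurable).symm
    rw [hsplit2, hGc, hρν] at hmse_le
    exact hmse_le
  have hBdd : BddAbove (Set.range fun G : Measure (ΩSp M₁ M₂ N) =>
      ⨆ _ : G ∈ SetF ν A B φA ψB c, MSE G ρ) := by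
    refine ⟨max 0 (2 * c + 2 * ∫ x, ‖ρ x‖ ^ 2 ∂ν), ?_⟩
    rintro y ⟨G, rfl⟩
    beta_reduce
    by_cases hG : G ∈ SetF ν A B φA ψB c
    · have he : (⨆ _ : G ∈ SetF ν A B φA ψB c, MSE G ρ) = MSE G ρ := ciSup_pos hG
      rw [he]
      exact le_max_of_le_right (hbound G hG)
    · haveI : IsEmpty (G ∈ SetF ν A B φA ψB c) := ⟨hG⟩
      have he : (⨆ _ : G ∈ SetF ν A B φA ψB c, MSE G ρ) = 0 :=
        Real.iSup_of_isEmpty _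
      rw [he]
      exact le_max_left _ _
  have hle : ∀ G ∈ SetF ν A B φA ψB c, MSE G ρ ≤ ⨆ F ∈ SetF ν A B φA ψB c, MSE F ρ := by
    intro G hG
    have he : (⨆ _ : G ∈ SetF ν A B φA ψB c, MSE G ρ) = MSE G ρ := ciSup_pos hG
    calc MSE G ρ = ⨆ _ : G ∈ SetF ν A B φA ψB c, MSE G ρ := he.symm
      _ ≤ ⨆ F ∈ SetF ν A B φA ψB c, MSE F ρ := le_ciSup hBdd G
  rw [← hJres]
  rcases hor with h | h
  · exact h.trans (hle F hFS)
  · exact h.trans (hle (F.map T) hF'S)
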